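/- arXiv:2207.08423 — 3 statements merged into one kernel-verified Lean document; each statement's English description precedes it below -/
import Mathlib

section
/- For every positive natural number k and all θ ∈ (0,1), the shifted Legendre polynomial satisfies |l_k(θ)| ≤ (1/2)·√(π/(2k·θ·(1−θ))). -/
open Finset Real

/-- Shifted Legendre polynomial of degree `k` on `[0,1]`. -/
noncomputable def shiftedLegendre (k : ℕ) (θ : ℝ) : ℝ :=
  ∑ j ∈ Finset.range (k + 1), (k.choose j : ℝ) * ((k + j).choose j : ℝ) * (θ - 1) ^ j

section Aux

lemma sl_vand (k j : ℕ) : ∑ m ∈ Finset.range (j+1), k.choose m * j.choose m = (k+j).choose j := by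
  rw [Nat.add_choose_eq, Finset.Nat.sum_antidiagonal_eq_sum_range_succ_mk]
  refine Finset.sum_congr rfl fun m hm => ?_
  have := Finset.mem_range.mp hm
  simp only []
  rw [Nat.choose_symm (by omega : m ≤ j)]

lemma sl_key_nat (k j : ℕ) (hjk : j ≤ k) :
    ∑ m ∈ Finset.range (j+1), k.choose m * k.choose m * (k-m).choose (j-m)
      = k.choose j * (k+j).choose j := by
  calc ∑ m ∈ Finset.range (j+1), k.choose m * k.choose m * (k-m).choose (j-m)
      = ∑ m ∈ Finset.range (j+1), k.choose j * (k.choose m * j.choose m) := by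
        refine Finset.sum_congr rfl fun m hm => ?_
        have hmj := Nat.lt_succ_iff.mp (Finset.mem_range.mp hm)
        rw [mul_assoc, ← Nat.choose_mul (n := k) hmj]
        ring
    _ = k.choose j * (k+j).choose j := by rw [← Finset.mul_sum, sl_vand]

lemma sl_tri (n : ℕ) (f : ℕ → ℕ → ℝ) :
    ∑ m ∈ Finset.range (n+1), ∑ i ∈ Finset.range (n-m+1), f m (m+i)
      = ∑ j ∈ Finset.range (n+1), ∑ m ∈ Finset.range (j+1), f m j := by
  rw [Finset.sum_sigma', Finset.sum_sigma']
  refine Finset.sum_nbij' (fun p => ⟨p.1 + p.2, p.1⟩) (fun p => ⟨p.2, p.1 - p.2⟩) ?_ ?_ ?_ ?_ ?_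
  · rintro ⟨m, i⟩ h
    simp only [Finset.mem_sigma, Finset.mem_range] at h ⊢
    omega
  · rintro ⟨j, m⟩ h
    simp only [Finset.mem_sigma, Finset.mem_range] at h ⊢
    omega
  · rintro ⟨m, i⟩ h; simp
  · rintro ⟨j, m⟩ h
    simp only [Finset.mem_sigma, Finset.mem_range] at h
    simp only [Sigma.mk.inj_iff]; exact ⟨by omega, HEq.rfl⟩
  · rintro ⟨m, i⟩ h; rfl

lemma sl_L1 (k : ℕ) (θ : ℝ) :
    shiftedLegendre k θ = ∑ m ∈ Finset.range (k+1), (k.choose m : ℝ)^2 * θ^(k-m) * (θ-1)^m := by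
  have expand : ∀ m ∈ Finset.range (k+1),
      (k.choose m : ℝ)^2 * θ^(k-m) * (θ-1)^m
        = ∑ i ∈ Finset.range (k-m+1),
            ((k.choose m : ℝ)^2 * ((k-m).choose ((m+i)-m) : ℝ) * (θ-1)^(m+i)) := by
    intro m hm
    have : θ = (θ - 1) + 1 := by ring
    rw [this]; rw [add_pow]
    rw [Finset.mul_sum, Finset.sum_mul]
    refine Finset.sum_congr rfl fun i hi => ?_
    simp only [Nat.add_sub_cancel_left, one_pow, pow_add]
    ring
  rw [Finset.sum_congr rfl expand,
    sl_tri k (fun m j => (k.choose m : ℝ)^2 * ((k-m).choose (j-m) : ℝ) * (θ-1)^j)]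
  unfold shiftedLegendre
  refine Finset.sum_congr rfl fun j hj => ?_
  have hjk := Nat.lt_succ_iff.mp (Finset.mem_range.mp hj)
  rw [show ∀ s : ℝ, (k.choose j : ℝ) * ((k+j).choose j : ℝ) * s = ((k.choose j * (k+j).choose j : ℕ) : ℝ) * s by intro s; push_cast; ring]
  rw [← sl_key_nat k j hjk]
  push_cast
  rw [Finset.sum_mul]
  refine (Finset.sum_congr rfl fun m hm => ?_).symm
  ring

lemma sl_orth (m n : ℕ) :
    ∫ ψ in (0:ℝ)..(2*π), Complex.exp (ψ*Complex.I)^m * Complex.exp (-(ψ*Complex.I))^n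
      = if m = n then (2*π:ℂ) else 0 := by
  have hfun : ∀ ψ:ℝ, Complex.exp (ψ*Complex.I)^m * Complex.exp (-(ψ*Complex.I))^n
      = Complex.exp ((((m:ℂ)-n)*Complex.I)*ψ) := by
    intro ψ
    rw [← Complex.exp_nat_mul, ← Complex.exp_nat_mul, ← Complex.exp_add]
    ring_nf
  simp only [hfun]
  by_cases h : m = n
  · subst h
    simp only [sub_self, zero_mul, Complex.exp_zero, if_pos rfl]
    rw [intervalIntegral.integral_const]
    simp [Complex.real_smul]
  · have hc : ((m:ℂ)-n)*Complex.I ≠ 0 :=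
      mul_ne_zero (sub_ne_zero.mpr (by exact_mod_cast h)) Complex.I_ne_zero
    rw [if_neg h, integral_exp_mul_complex hc]
    have h2 : (((m:ℂ)-n)*Complex.I) * (2*π:ℝ) = ((((m:ℤ)-(n:ℤ)) : ℤ) : ℂ) * (2*(π:ℂ)*Complex.I) := by
      push_cast; ring
    rw [h2, Complex.exp_int_mul_two_pi_mul_I]
    simp

lemma sl_L2 (k : ℕ) (θ : ℝ) (hθ0 : 0 ≤ θ) (hθ1 : θ ≤ 1) :
    ∫ ψ in (0:ℝ)..(2*π),
        ((Real.sqrt θ : ℂ) + Complex.I * (Real.sqrt (1-θ):ℂ) * Complex.exp (ψ * Complex.I))^k *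
        ((Real.sqrt θ : ℂ) + Complex.I * (Real.sqrt (1-θ):ℂ) * Complex.exp (-(ψ * Complex.I)))^k
      = (2*π:ℝ) * ∑ m ∈ Finset.range (k+1), (k.choose m : ℂ)^2 * (θ:ℂ)^(k-m) * ((θ:ℂ)-1)^m := by
  set A : ℂ := (Real.sqrt θ : ℂ) with hA
  set B : ℂ := Complex.I * (Real.sqrt (1-θ):ℂ) with hB
  set c : ℕ → ℂ := fun m => B^m * A^(k-m) * (k.choose m : ℂ) with hc
  have hz : ∀ x : ℂ, (A + B * x)^k = ∑ m ∈ Finset.range (k+1), c m * x^m := by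
    intro x
    rw [add_comm A, add_pow]
    refine Finset.sum_congr rfl fun m hm => ?_
    rw [mul_pow, hc]; ring
  have step1 : ∀ ψ : ℝ,
      (A + B * Complex.exp (ψ * Complex.I))^k * (A + B * Complex.exp (-(ψ * Complex.I)))^k
        = ∑ m ∈ Finset.range (k+1), ∑ n ∈ Finset.range (k+1),
            (c m * c n) * (Complex.exp (ψ*Complex.I)^m * Complex.exp (-(ψ*Complex.I))^n) := by
    intro ψ
    rw [hz, hz, Finset.sum_mul_sum]
    exact Finset.sum_congr rfl fun m _ => Finset.sum_congr rfl fun n _ => by ring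
  have hcont : ∀ m n : ℕ, Continuous (fun ψ : ℝ =>
      (c m * c n) * (Complex.exp (ψ*Complex.I)^m * Complex.exp (-(ψ*Complex.I))^n)) := by
    intro m n; fun_prop
  calc (∫ ψ in (0:ℝ)..(2*π),
        (A + B * Complex.exp (ψ * Complex.I))^k * (A + B * Complex.exp (-(ψ * Complex.I)))^k)
      = ∫ ψ in (0:ℝ)..(2*π), ∑ m ∈ Finset.range (k+1), ∑ n ∈ Finset.range (k+1),
            (c m * c n) * (Complex.exp (ψ*Complex.I)^m * Complex.exp (-(ψ*Complex.I))^n) := by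
        simp only [step1]
    _ = ∑ m ∈ Finset.range (k+1), ∑ n ∈ Finset.range (k+1),
          (c m * c n) * ∫ ψ in (0:ℝ)..(2*π),
            Complex.exp (ψ*Complex.I)^m * Complex.exp (-(ψ*Complex.I))^n := by
        rw [intervalIntegral.integral_finset_sum]
        · refine Finset.sum_congr rfl fun m _ => ?_
          rw [intervalIntegral.integral_finset_sum]
          · exact Finset.sum_congr rfl fun n _ => intervalIntegral.integral_const_mul _ _
          · exact fun n _ => ((hcont m n).intervalIntegrable _ _)
        · exact fun m _ => (by fun_prop : Continuous _).intervalIntegrable _ _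
    _ = ∑ m ∈ Finset.range (k+1), (c m * c m) * (2*π:ℂ) := by
        refine Finset.sum_congr rfl fun m hm => ?_
        rw [Finset.sum_eq_single m]
        · rw [sl_orth, if_pos rfl]
        · intro n _ hnm; rw [sl_orth, if_neg (fun h => hnm h.symm), mul_zero]
        · intro h; exact absurd hm h
    _ = (2*π:ℝ) * ∑ m ∈ Finset.range (k+1), (k.choose m : ℂ)^2 * (θ:ℂ)^(k-m) * ((θ:ℂ)-1)^m := by
        rw [Finset.mul_sum]
        push_cast
        refine Finset.sum_congr rfl fun m hm => ?_
        have hA2 : A^2 = (θ:ℂ) := by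
          rw [hA]; norm_cast; rw [Real.sq_sqrt hθ0]
        have hB2 : B^2 = (θ:ℂ) - 1 := by
          rw [hB, mul_pow, Complex.I_sq]; norm_cast
          rw [Real.sq_sqrt (by linarith : (0:ℝ) ≤ 1 - θ)]
          push_cast; ring
        have : c m * c m = (k.choose m : ℂ)^2 * (θ:ℂ)^(k-m) * ((θ:ℂ)-1)^m := by
          rw [hc]
          simp only []
          rw [show B ^ m * A ^ (k - m) * ↑(k.choose m) * (B ^ m * A ^ (k - m) * ↑(k.choose m))
              = (k.choose m : ℂ)^2 * (A^2)^(k-m) * (B^2)^m by ring, hA2, hB2]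
        rw [this]; ring

lemma sl_normsq_z (θ ψ : ℝ) (hθ0 : 0 ≤ θ) (hθ1 : θ ≤ 1) :
    Complex.normSq ((Real.sqrt θ : ℂ) + Complex.I * (Real.sqrt (1-θ):ℂ) * Complex.exp (ψ * Complex.I))
      = 1 - 2 * Real.sqrt θ * Real.sqrt (1-θ) * Real.sin ψ := by
  have ha : Real.sqrt θ ^ 2 = θ := Real.sq_sqrt hθ0
  have hb : Real.sqrt (1-θ) ^ 2 = 1 - θ := Real.sq_sqrt (by linarith)
  have hcs := Real.sin_sq_add_cos_sq ψ
  simp only [Complex.normSq_apply, Complex.add_re, Complex.add_im, Complex.mul_re, Complex.mul_im,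
    Complex.I_re, Complex.I_im, Complex.ofReal_re, Complex.ofReal_im,
    Complex.exp_ofReal_mul_I_re, Complex.exp_ofReal_mul_I_im]
  nlinarith [ha, hb, hcs]

lemma sl_normsq_w (θ ψ : ℝ) (hθ0 : 0 ≤ θ) (hθ1 : θ ≤ 1) :
    Complex.normSq ((Real.sqrt θ : ℂ) + Complex.I * (Real.sqrt (1-θ):ℂ) * Complex.exp (-(ψ * Complex.I)))
      = 1 + 2 * Real.sqrt θ * Real.sqrt (1-θ) * Real.sin ψ := by
  have h : -((ψ:ℂ) * Complex.I) = ((-ψ : ℝ) : ℂ) * Complex.I := by push_cast; ring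
  rw [h, sl_normsq_z θ (-ψ) hθ0 hθ1, Real.sin_neg]
  ring

lemma sl_L3 (k : ℕ) (θ ψ : ℝ) (hθ0 : 0 ≤ θ) (hθ1 : θ ≤ 1) :
    ‖((Real.sqrt θ : ℂ) + Complex.I * (Real.sqrt (1-θ):ℂ) * Complex.exp (ψ * Complex.I))^k *
      ((Real.sqrt θ : ℂ) + Complex.I * (Real.sqrt (1-θ):ℂ) * Complex.exp (-(ψ * Complex.I)))^k‖
      ≤ Real.exp (-(2 * k * (θ * (1-θ)) * Real.sin ψ ^ 2)) := by
  set z := (Real.sqrt θ : ℂ) + Complex.I * (Real.sqrt (1-θ):ℂ) * Complex.exp (ψ * Complex.I) with hzdef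
  set w := (Real.sqrt θ : ℂ) + Complex.I * (Real.sqrt (1-θ):ℂ) * Complex.exp (-(ψ * Complex.I)) with hwdef
  have key : ‖z‖ * ‖w‖ ≤ Real.exp (-(2 * (θ * (1-θ)) * Real.sin ψ ^ 2)) := by
    have h1 : ‖z‖ * ‖w‖ = Real.sqrt (Complex.normSq z * Complex.normSq w) := by
      rw [Real.sqrt_mul (Complex.normSq_nonneg z),
        Complex.norm_def, Complex.norm_def]
    have h2 : Complex.normSq z * Complex.normSq w = 1 - 4 * (θ * (1-θ)) * Real.sin ψ ^ 2 := by
      rw [sl_normsq_z θ ψ hθ0 hθ1, sl_normsq_w θ ψ hθ0 hθ1]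
      have ha : Real.sqrt θ ^ 2 = θ := Real.sq_sqrt hθ0
      have hb : Real.sqrt (1-θ) ^ 2 = 1 - θ := Real.sq_sqrt (by linarith)
      linear_combination (-4*Real.sin ψ^2*Real.sqrt θ^2) * hb + (-4*Real.sin ψ^2*(1-θ)) * ha
    rw [h1, h2]
    have h3 : 1 - 4 * (θ * (1-θ)) * Real.sin ψ ^ 2
        ≤ Real.exp (-(4 * (θ * (1-θ)) * Real.sin ψ ^ 2)) := by
      have := Real.add_one_le_exp (-(4 * (θ * (1-θ)) * Real.sin ψ ^ 2))
      linarith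
    calc Real.sqrt (1 - 4 * (θ * (1-θ)) * Real.sin ψ ^ 2)
        ≤ Real.sqrt (Real.exp (-(4 * (θ * (1-θ)) * Real.sin ψ ^ 2))) := Real.sqrt_le_sqrt h3
      _ = Real.exp (-(2 * (θ * (1-θ)) * Real.sin ψ ^ 2)) := by
          rw [← Real.exp_half]; ring_nf
  calc ‖z^k * w^k‖ = (‖z‖ * ‖w‖)^k := by rw [norm_mul, norm_pow, norm_pow, mul_pow]
    _ ≤ (Real.exp (-(2 * (θ * (1-θ)) * Real.sin ψ ^ 2)))^k := by
        apply pow_le_pow_left₀ (by positivity) key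
    _ = Real.exp (-(2 * k * (θ * (1-θ)) * Real.sin ψ ^ 2)) := by
        rw [← Real.exp_nat_mul]; ring_nf

open MeasureTheory in
lemma sl_L4 (c : ℝ) (hc : 0 < c) :
    ∫ ψ in (0:ℝ)..(2*π), Real.exp (-(c * Real.sin ψ ^ 2))
      ≤ 2 * π * Real.sqrt (π / (4*c)) := by
  set f : ℝ → ℝ := fun ψ => Real.exp (-(c * Real.sin ψ ^ 2)) with hf
  have hfc : Continuous f := by fun_prop
  have hint : ∀ a b : ℝ, IntervalIntegrable f volume a b := fun a b => hfc.intervalIntegrable a b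
  have hpi := Real.pi_pos
  have h2 : ∫ ψ in π..(2*π), f ψ = ∫ ψ in (0:ℝ)..π, f ψ := by
    have h := intervalIntegral.integral_comp_add_right (a := (0:ℝ)) (b := π) f π
    simp only [zero_add] at h
    rw [show (2:ℝ)*π = π + π by ring, ← h]
    refine intervalIntegral.integral_congr fun x _ => ?_
    simp only [hf, Real.sin_add_pi, neg_sq]
  have h4 : ∫ ψ in (π/2)..π, f ψ = ∫ ψ in (0:ℝ)..(π/2), f ψ := by
    have h := intervalIntegral.integral_comp_sub_left (a := (0:ℝ)) (b := π/2) f π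
    rw [show π - π/2 = π/2 by ring, sub_zero] at h
    rw [← h]
    refine intervalIntegral.integral_congr fun x _ => ?_
    simp only [hf, Real.sin_pi_sub]
  have hsplit : ∫ ψ in (0:ℝ)..(2*π), f ψ = 4 * ∫ ψ in (0:ℝ)..(π/2), f ψ := by
    rw [← intervalIntegral.integral_add_adjacent_intervals (hint 0 π) (hint π (2*π)), h2,
      ← intervalIntegral.integral_add_adjacent_intervals (hint 0 (π/2)) (hint (π/2) π), h4]
    ring
  set b : ℝ := 4*c/π^2 with hb
  have hbpos : 0 < b := by positivity
  have hgint : Integrable (fun x : ℝ => Real.exp (-b * x^2)) := integrable_exp_neg_mul_sq hbpos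
  have h5 : ∫ ψ in (0:ℝ)..(π/2), f ψ ≤ ∫ ψ in (0:ℝ)..(π/2), Real.exp (-b * ψ^2) := by
    refine intervalIntegral.integral_mono_on (by linarith) (hint 0 (π/2))
      hgint.intervalIntegrable fun x hx => ?_
    obtain ⟨hx0, hx1⟩ := hx
    have hj : 2/π * x ≤ Real.sin x := Real.mul_le_sin hx0 hx1
    have hsq : (2/π * x)^2 ≤ Real.sin x ^ 2 := by
      apply pow_le_pow_left₀ (by positivity) hj
    simp only [hf]
    apply Real.exp_le_exp.mpr
    have hkey : 4*c/π^2 * x^2 = c * (2/π*x)^2 := by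
      field_simp
      ring
    rw [hb, neg_mul, neg_le_neg_iff, hkey]
    exact mul_le_mul_of_nonneg_left hsq hc.le
  have h6 : ∫ ψ in (0:ℝ)..(π/2), Real.exp (-b * ψ^2) ≤ Real.sqrt (π / b) / 2 := by
    rw [intervalIntegral.integral_of_le (by linarith)]
    rw [← integral_gaussian_Ioi b]
    refine MeasureTheory.setIntegral_mono_set hgint.integrableOn ?_ ?_
    · exact Filter.Eventually.of_forall fun x => (Real.exp_pos _).le
    · exact (Set.Ioc_subset_Ioi_self).eventuallyLE
  have h7 : Real.sqrt (π / b) = π * Real.sqrt (π / (4*c)) := by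
    rw [hb, show π / (4*c/π^2) = π^2 * (π / (4*c)) by field_simp,
      Real.sqrt_mul (by positivity), Real.sqrt_sq hpi.le]
  calc ∫ ψ in (0:ℝ)..(2*π), f ψ = 4 * ∫ ψ in (0:ℝ)..(π/2), f ψ := hsplit
    _ ≤ 4 * (Real.sqrt (π / b) / 2) := by linarith [le_trans h5 h6]
    _ = 2 * π * Real.sqrt (π / (4*c)) := by rw [h7]; ring

end Aux

theorem shiftedLegendre_sharp_bound (k : ℕ) (hk : 1 ≤ k)
    (θ : ℝ) (hθ : θ ∈ Set.Ioo (0:ℝ) 1) :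
    |shiftedLegendre k θ| ≤
      (1 / 2) * Real.sqrt (Real.pi / (2 * (k : ℝ) * θ * (1 - θ))) := by
  obtain ⟨hθ0, hθ1⟩ := hθ
  have hpi := Real.pi_pos
  set c : ℝ := 2 * k * (θ * (1-θ)) with hcdef
  have hcpos : 0 < c := by
    have : (1:ℝ) ≤ k := by exact_mod_cast hk
    have h1 : 0 < θ * (1-θ) := mul_pos hθ0 (by linarith)
    nlinarith
  -- complexified value
  have hS : ((shiftedLegendre k θ : ℝ) : ℂ)
      = ∑ m ∈ Finset.range (k+1), (k.choose m : ℂ)^2 * (θ:ℂ)^(k-m) * ((θ:ℂ)-1)^m := by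
    rw [sl_L1]
    push_cast
    rfl
  set G : ℝ → ℂ := fun ψ =>
    ((Real.sqrt θ : ℂ) + Complex.I * (Real.sqrt (1-θ):ℂ) * Complex.exp (ψ * Complex.I))^k *
    ((Real.sqrt θ : ℂ) + Complex.I * (Real.sqrt (1-θ):ℂ) * Complex.exp (-(ψ * Complex.I)))^k
    with hG
  have hint : (∫ ψ in (0:ℝ)..(2*π), G ψ) = (2*π:ℝ) * ((shiftedLegendre k θ : ℝ) : ℂ) := by
    rw [hS]
    exact sl_L2 k θ hθ0.le hθ1.le
  have hGcont : Continuous G := by rw [hG]; fun_prop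
  have hbound1 : 2*π * |shiftedLegendre k θ| ≤ ∫ ψ in (0:ℝ)..(2*π), ‖G ψ‖ := by
    have h1 : ‖∫ ψ in (0:ℝ)..(2*π), G ψ‖ ≤ ∫ ψ in (0:ℝ)..(2*π), ‖G ψ‖ :=
      intervalIntegral.norm_integral_le_integral_norm (by linarith)
    rw [hint] at h1
    calc 2*π * |shiftedLegendre k θ| = ‖((2*π:ℝ):ℂ)‖ * ‖((shiftedLegendre k θ : ℝ):ℂ)‖ := by
          rw [Complex.norm_real, Complex.norm_real, Real.norm_eq_abs, Real.norm_eq_abs,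
            abs_of_nonneg (by linarith : (0:ℝ) ≤ 2*π)]
      _ = ‖((2*π:ℝ):ℂ) * ((shiftedLegendre k θ : ℝ):ℂ)‖ := (norm_mul _ _).symm
      _ ≤ ∫ ψ in (0:ℝ)..(2*π), ‖G ψ‖ := by
          convert h1 using 2
          try push_cast
          try ring
  have hbound2 : (∫ ψ in (0:ℝ)..(2*π), ‖G ψ‖)
      ≤ ∫ ψ in (0:ℝ)..(2*π), Real.exp (-(c * Real.sin ψ ^ 2)) := by
    refine intervalIntegral.integral_mono_on (by linarith)
      (hGcont.norm.intervalIntegrable _ _)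
      ((by fun_prop : Continuous fun ψ : ℝ => Real.exp (-(c * Real.sin ψ ^ 2))).intervalIntegrable _ _)
      fun x hx => ?_
    rw [hcdef]
    have := sl_L3 k θ x hθ0.le hθ1.le
    rw [hG]
    convert this using 3
    try ring
  have hbound3 := sl_L4 c hcpos
  have hfinal : 2*π * |shiftedLegendre k θ| ≤ 2*π * Real.sqrt (π / (4*c)) :=
    le_trans hbound1 (le_trans hbound2 hbound3)
  have hmain : |shiftedLegendre k θ| ≤ Real.sqrt (π / (4*c)) := by
    have h2pi : (0:ℝ) < 2*π := by linarith
    exact le_of_mul_le_mul_left hfinal h2pi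
  refine le_trans hmain (le_of_eq ?_)
  have hk0 : (0:ℝ) < (k:ℝ) := by
    have : 0 < k := hk
    exact_mod_cast this
  set X : ℝ := π / (2 * (k:ℝ) * θ * (1-θ)) with hX
  have hXnn : 0 ≤ X := by
    rw [hX]
    have : 0 < 2 * (k:ℝ) * θ * (1-θ) := by nlinarith
    positivity
  have hY : π / (4*c) = X * (1/4) := by
    rw [hX, hcdef]
    have h1 : θ ≠ 0 := ne_of_gt hθ0
    have h2 : (1-θ) ≠ 0 := by intro h; linarith [h]
    have h3 : (k:ℝ) ≠ 0 := ne_of_gt hk0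
    field_simp
    try tauto
  rw [hY, Real.sqrt_mul hXnn,
    show (1/4:ℝ) = (1/2)^2 by norm_num, Real.sqrt_sq (by norm_num : (0:ℝ) ≤ 1/2)]
  ring
end

section
/- For every natural number k and all θ ∈ [0,1], the derivative of the shifted Legendre polynomial satisfies |l_k'(θ)| ≤ l_k'(1) = k(k+1). -/
open Finset

open Polynomial

noncomputable def legQ (k : ℕ) : Polynomial ℝ :=
  ∑ j ∈ Finset.range (k + 1),
    Polynomial.monomial j ((k.choose j : ℝ) * ((k + j).choose j : ℝ))

lemma legQ_coeff (k n : ℕ) :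
    (legQ k).coeff n = (k.choose n : ℝ) * ((k + n).choose n : ℝ) := by
  rw [legQ, Polynomial.finset_sum_coeff]
  simp only [Polynomial.coeff_monomial]
  by_cases h : n ≤ k
  · rw [Finset.sum_eq_single n] <;> simp_all [Nat.lt_succ_of_le]
  · push_neg at h
    rw [Finset.sum_eq_zero, Nat.choose_eq_zero_of_lt h]
    · simp
    · intro b hb
      have : ¬ (b = n) := by have := Finset.mem_range.1 hb; omega
      simp [this]

lemma leg_rec (k j : ℕ) :
    ((j:ℝ)+1)^2 * (legQ k).coeff (j+1) = ((k:ℝ)*(k+1) - j*(j+1)) * (legQ k).coeff j := by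
  rw [legQ_coeff, legQ_coeff]
  by_cases h : j ≤ k
  · have h1 : k.choose (j+1) * (j+1) = k.choose j * (k - j) := Nat.choose_succ_right_eq k j
    have h2 : (k+j+1) * (k+j).choose j = (k+j+1).choose (j+1) * (j+1) :=
      Nat.add_one_mul_choose_eq (k+j) j
    have e1 : ((k.choose (j+1) : ℝ)) * ((j:ℝ)+1) = (k.choose j : ℝ) * ((k:ℝ) - j) := by
      have := congrArg (fun n : ℕ => (n : ℝ)) h1
      push_cast [Nat.cast_sub h] at this
      linarith
    have e2 : ((k:ℝ)+j+1) * ((k+j).choose j : ℝ) = ((k+j+1).choose (j+1) : ℝ) * ((j:ℝ)+1) := by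
      have := congrArg (fun n : ℕ => (n : ℝ)) h2
      push_cast at this
      linarith
    have hkj : (k + (j+1)) = k + j + 1 := by ring
    rw [hkj]
    calc ((j:ℝ)+1)^2 * ((k.choose (j+1) : ℝ) * ((k+j+1).choose (j+1) : ℝ))
        = ((k.choose (j+1) : ℝ) * ((j:ℝ)+1)) * (((k+j+1).choose (j+1) : ℝ) * ((j:ℝ)+1)) := by ring
      _ = ((k.choose j : ℝ) * ((k:ℝ) - j)) * (((k:ℝ)+j+1) * ((k+j).choose j : ℝ)) := by
          rw [e1, e2]
      _ = ((k:ℝ)*(k+1) - j*(j+1)) * ((k.choose j : ℝ) * ((k+j).choose j : ℝ)) := by ring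
  · push_neg at h
    rw [Nat.choose_eq_zero_of_lt h, Nat.choose_eq_zero_of_lt (by omega : k < j + 1)]
    ring

variable (k : ℕ)

lemma ode_coeff_eq (R : Polynomial ℝ) (n : ℕ) :
    ((X + X^2) * derivative (derivative R) + (1 + 2*X) * derivative R).coeff n =
      ((n:ℝ)+1)^2 * R.coeff (n+1) + (n:ℝ)*((n:ℝ)+1) * R.coeff n := by
  have expand : (X + X^2) * derivative (derivative R) + (1 + 2*X) * derivative R =
      X * derivative (derivative R) + X^2 * derivative (derivative R) +
      derivative R + (X * derivative R + X * derivative R) := by ring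
  rw [expand]
  match n with
  | 0 =>
    simp [Polynomial.mul_coeff_zero, Polynomial.coeff_derivative]
  | 1 =>
    simp [Polynomial.coeff_add, Polynomial.coeff_X_mul, Polynomial.coeff_X_pow_mul',
      Polynomial.coeff_derivative]
    ring
  | (n+2) =>
    have h2 : ∀ p : Polynomial ℝ, (X^2 * p).coeff (n+2) = p.coeff n := fun p => by
      simpa using Polynomial.coeff_X_pow_mul p 2 n
    simp only [Polynomial.coeff_add, Polynomial.coeff_X_mul, h2, Polynomial.coeff_derivative]
    push_cast
    ring

lemma ode_of_rec (R : Polynomial ℝ)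
    (h : ∀ n : ℕ, ((n:ℝ)+1)^2 * R.coeff (n+1) = ((k:ℝ)*(k+1) - n*(n+1)) * R.coeff n) :
    (X + X^2) * derivative (derivative R) + (1 + 2*X) * derivative R =
      C ((k:ℝ)*(k+1)) * R := by
  ext n
  rw [ode_coeff_eq, Polynomial.coeff_C_mul]
  linear_combination h n

lemma rec_of_ode (R : Polynomial ℝ)
    (h : (X + X^2) * derivative (derivative R) + (1 + 2*X) * derivative R =
      C ((k:ℝ)*(k+1)) * R) :
    ∀ n : ℕ, ((n:ℝ)+1)^2 * R.coeff (n+1) = ((k:ℝ)*(k+1) - n*(n+1)) * R.coeff n := by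
  intro n
  have := congrArg (fun p : Polynomial ℝ => p.coeff n) h
  simp only [ode_coeff_eq, Polynomial.coeff_C_mul] at this
  linear_combination this

lemma legQ_ode : (X + X^2) * derivative (derivative (legQ k)) + (1 + 2*X) * derivative (legQ k) =
    C ((k:ℝ)*(k+1)) * legQ k :=
  ode_of_rec k _ (leg_rec k)

lemma eq_C_mul_of_ode (R : Polynomial ℝ)
    (h : (X + X^2) * derivative (derivative R) + (1 + 2*X) * derivative R =
      C ((k:ℝ)*(k+1)) * R) :
    R = C (R.coeff 0) * legQ k := by
  have hR := rec_of_ode k R h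
  have hQ := leg_rec k
  have key : ∀ n : ℕ, R.coeff n = R.coeff 0 * (legQ k).coeff n := by
    intro n
    induction n with
    | zero => rw [legQ_coeff]; simp
    | succ n ih =>
      have hne : ((n:ℝ)+1)^2 ≠ 0 := by positivity
      have e1 := hR n
      have e2 := hQ n
      rw [ih] at e1
      have key2 : ((n:ℝ)+1)^2 * R.coeff (n+1) =
          ((n:ℝ)+1)^2 * (R.coeff 0 * (legQ k).coeff (n+1)) := by
        linear_combination e1 - R.coeff 0 * e2
      exact mul_left_cancel₀ hne key2
  ext n
  rw [Polynomial.coeff_C_mul]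
  exact key n

noncomputable def legR (k : ℕ) : Polynomial ℝ := (legQ k).comp (-1 - X)

lemma legR_deriv : derivative (legR k) = -((derivative (legQ k)).comp (-1 - X)) := by
  rw [legR, Polynomial.derivative_comp]
  simp

lemma legR_deriv2 : derivative (derivative (legR k)) =
    (derivative (derivative (legQ k))).comp (-1 - X) := by
  rw [legR_deriv, derivative_neg, Polynomial.derivative_comp]
  simp

lemma legR_ode : (X + X^2) * derivative (derivative (legR k)) + (1 + 2*X) * derivative (legR k) =
    C ((k:ℝ)*(k+1)) * legR k := by
  have h := congrArg (fun p : Polynomial ℝ => p.comp (-1 - X)) (legQ_ode k)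
  simp only [Polynomial.add_comp, Polynomial.mul_comp, Polynomial.X_comp, Polynomial.pow_comp,
    Polynomial.one_comp, Polynomial.C_comp, Polynomial.ofNat_comp] at h
  rw [legR_deriv2, legR_deriv, legR]
  linear_combination h

lemma legR_eq : legR k = C (eval (-1) (legQ k)) * legQ k := by
  have h := eq_C_mul_of_ode k (legR k) (legR_ode k)
  rw [Polynomial.coeff_zero_eq_eval_zero, legR, Polynomial.eval_comp] at h
  norm_num at h
  rw [legR]
  exact h

lemma legQ_coeff_zero : (legQ k).coeff 0 = 1 := by
  rw [legQ_coeff]; simp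

lemma leg_c_sq : (eval (-1) (legQ k))^2 = 1 := by
  set c := eval (-1) (legQ k) with hc
  have hcomp : (legR k).comp (-1 - X) = legQ k := by
    rw [legR, Polynomial.comp_assoc]
    have : ((-1 - X : Polynomial ℝ)).comp (-1 - X) = X := by
      simp [Polynomial.sub_comp]
    rw [this, Polynomial.comp_X]
  have h := congrArg (fun p : Polynomial ℝ => p.comp (-1 - X)) (legR_eq k)
  simp only [Polynomial.mul_comp, Polynomial.C_comp] at h
  rw [hcomp] at h
  have h2 : legQ k = C (c*c) * legQ k := by
    conv_lhs => rw [h, ← legR, legR_eq]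
    rw [map_mul, ← hc]
    ring
  have := congrArg (fun p : Polynomial ℝ => p.coeff 0) h2
  simp only [Polynomial.coeff_C_mul, legQ_coeff_zero, mul_one] at this
  nlinarith [this]

lemma legQ_deriv_eval_zero : eval 0 (derivative (legQ k)) = (k:ℝ)*(k+1) := by
  rw [← Polynomial.coeff_zero_eq_eval_zero, Polynomial.coeff_derivative, legQ_coeff]
  simp [Nat.choose_one_right]

lemma legQ_deriv_eval_neg_one_sq :
    (eval (-1) (derivative (legQ k)))^2 = ((k:ℝ)*(k+1))^2 := by
  have h := congrArg derivative (legR_eq k)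
  rw [legR_deriv, derivative_C_mul] at h
  have h0 := congrArg (eval 0) h
  simp only [Polynomial.eval_neg, Polynomial.eval_comp, Polynomial.eval_mul, Polynomial.eval_C] at h0
  norm_num at h0
  -- h0 : -(eval (-1) D1) = c * eval 0 D1
  rw [legQ_deriv_eval_zero] at h0
  have : (eval (-1) (derivative (legQ k)))^2 =
      (eval (-1) (legQ k))^2 * ((k:ℝ)*(k+1))^2 := by
    linear_combination (eval (-1) (legQ k) * ((k:ℝ)*(k+1)) - eval (-1) (derivative (legQ k))) * h0
  rw [this, leg_c_sq, one_mul]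

lemma legQ_ode2 : (X + X^2) * derivative (derivative (derivative (legQ k))) +
    (2 + 4*X) * derivative (derivative (legQ k)) =
    C ((k:ℝ)*(k+1) - 2) * derivative (legQ k) := by
  have h := congrArg derivative (legQ_ode k)
  simp only [derivative_add, derivative_mul, derivative_one, derivative_X, derivative_C,
    derivative_ofNat, Polynomial.derivative_X_pow, derivative_C_mul, Nat.cast_ofNat,
    map_ofNat] at h
  rw [map_sub]
  have hC2 : (C (2:ℝ)) = (2 : Polynomial ℝ) := map_ofNat C 2
  rw [hC2]
  linear_combination h

lemma shifted_eq : _root_.shiftedLegendre k = fun θ : ℝ => eval (θ - 1) (legQ k) := by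
  funext θ
  simp [_root_.shiftedLegendre, legQ, Polynomial.eval_finset_sum]

lemma hasDerivAt_evalQ (p : Polynomial ℝ) (θ : ℝ) :
    HasDerivAt (fun x : ℝ => eval (x - 1) p) (eval (θ - 1) (derivative p)) θ := by
  have h1 := Polynomial.hasDerivAt p (θ - 1)
  have h2 : HasDerivAt (fun x : ℝ => x - 1) 1 θ := (hasDerivAt_id θ).sub_const 1
  have h3 := HasDerivAt.comp θ h1 h2
  rw [mul_one] at h3
  exact h3

lemma deriv_shifted (θ : ℝ) :
    deriv (shiftedLegendre k) θ = eval (θ - 1) (derivative (legQ k)) := by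
  rw [shifted_eq]
  exact (hasDerivAt_evalQ (legQ k) θ).deriv

lemma legQ_deriv_small (hk : k ≤ 1) : derivative (legQ k) = C ((k:ℝ)*(k+1)) := by
  ext n
  rw [Polynomial.coeff_derivative, legQ_coeff]
  match n with
  | 0 => simp [Nat.choose_one_right]
  | (n+1) =>
    have h1 : k < n + 2 := by omega
    rw [Nat.choose_eq_zero_of_lt h1, Polynomial.coeff_C]
    norm_num

theorem shiftedLegendre_deriv_bound (k : ℕ) :
    (∀ θ ∈ Set.Icc (0:ℝ) 1, |deriv (shiftedLegendre k) θ| ≤ deriv (shiftedLegendre k) 1)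
      ∧ deriv (shiftedLegendre k) 1 = (k : ℝ) * (k + 1) := by
  have hder1 : deriv (shiftedLegendre k) 1 = (k:ℝ)*(k+1) := by
    rw [deriv_shifted]
    norm_num [legQ_deriv_eval_zero]
  refine ⟨?_, hder1⟩
  intro θ hθ
  rw [hder1, deriv_shifted]
  by_cases hk : k ≤ 1
  · rw [legQ_deriv_small k hk]
    rw [Polynomial.eval_C, abs_of_nonneg (by positivity)]
  · push_neg at hk
    have hk2 : (2:ℝ) ≤ (k:ℝ) := by exact_mod_cast hk
    set lam : ℝ := (k:ℝ)*(k+1) - 2 with hlam_def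
    have hlam : 0 < lam := by nlinarith
    set D1 := derivative (legQ k) with hD1def
    set D2 := derivative D1 with hD2def
    set D3 := derivative D2 with hD3def
    set u : ℝ → ℝ := fun x => eval (x-1) D1 with hu
    set v : ℝ → ℝ := fun x => eval (x-1) D2 with hv
    set g : ℝ → ℝ := fun x => lam * (u x)^2 + (x - x^2) * (v x)^2 with hgdef
    have ode2 : ∀ x : ℝ, ((x-1) + (x-1)^2) * eval (x-1) D3 + (2 + 4*(x-1)) * v x
        = lam * u x := by
      intro x
      have h := congrArg (eval (x-1)) (legQ_ode2 k)
      simp only [Polynomial.eval_add, Polynomial.eval_mul, Polynomial.eval_pow,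
        Polynomial.eval_X, Polynomial.eval_C, Polynomial.eval_ofNat] at h
      rw [← hlam_def, ← hD1def] at h
      rw [← hD2def] at h
      rw [← hD3def] at h
      show ((x-1) + (x-1)^2) * eval (x-1) D3 + (2 + 4*(x-1)) * eval (x-1) D2
        = lam * eval (x-1) D1
      linarith [h]
    have hg : ∀ x : ℝ, HasDerivAt g (3*(2*x-1)*(v x)^2) x := by
      intro x
      have hu' : HasDerivAt u (v x) x := hasDerivAt_evalQ D1 x
      have hv' : HasDerivAt v (eval (x-1) D3) x := hasDerivAt_evalQ D2 x
      have h1 : HasDerivAt (fun y => lam * (u y)^2) (lam * (2 * u x * v x)) x := by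
        have := (hu'.pow 2).const_mul lam
        simpa [mul_comm, mul_assoc, mul_left_comm] using this
      have hq : HasDerivAt (fun y : ℝ => y - y^2) (1 - 2*x) x := by
        have := (hasDerivAt_id x).sub (hasDerivAt_pow 2 x)
        refine this.congr_deriv ?_
        norm_num
      have h2 : HasDerivAt (fun y => (y - y^2) * (v y)^2)
          ((1-2*x) * (v x)^2 + (x - x^2) * (2 * v x * eval (x-1) D3)) x := by
        have := hq.mul (hv'.pow 2)
        refine this.congr_deriv ?_
        simp
      have hsum := h1.add h2
      refine hsum.congr_deriv ?_
      linear_combination (-(2 * v x)) * (ode2 x)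
    have hdiff : Differentiable ℝ g := fun x => (hg x).differentiableAt
    have hderiv : ∀ x, deriv g x = 3*(2*x-1)*(v x)^2 := fun x => (hg x).deriv
    have mono : MonotoneOn g (Set.Icc (1/2 : ℝ) 1) := by
      apply monotoneOn_of_deriv_nonneg (convex_Icc _ _) hdiff.continuous.continuousOn
        hdiff.differentiableOn
      intro x hx
      rw [interior_Icc] at hx
      rw [hderiv]
      exact mul_nonneg (by nlinarith [hx.1]) (sq_nonneg _)
    have anti : AntitoneOn g (Set.Icc (0:ℝ) (1/2)) := by
      apply antitoneOn_of_deriv_nonpos (convex_Icc _ _) hdiff.continuous.continuousOn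
        hdiff.differentiableOn
      intro x hx
      rw [interior_Icc] at hx
      rw [hderiv]
      exact mul_nonpos_of_nonpos_of_nonneg (by nlinarith [hx.2]) (sq_nonneg _)
    have hu0 : (u 0)^2 = ((k:ℝ)*(k+1))^2 := by
      have h := legQ_deriv_eval_neg_one_sq k
      rw [hu]
      norm_num
      convert h using 3
    have hu1 : (u 1)^2 = ((k:ℝ)*(k+1))^2 := by
      have h := legQ_deriv_eval_zero k
      rw [hu]
      norm_num
      rw [h]
    have hg0 : g 0 = lam * ((k:ℝ)*(k+1))^2 := by
      rw [hgdef]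
      simp [hu0]
    have hg1 : g 1 = lam * ((k:ℝ)*(k+1))^2 := by
      rw [hgdef]
      simp [hu1]
    have hbound : g θ ≤ lam * ((k:ℝ)*(k+1))^2 := by
      rcases le_or_gt θ (1/2) with h | h
      · rw [← hg0]
        exact anti (Set.mem_Icc.2 ⟨le_refl 0, by norm_num⟩) (Set.mem_Icc.2 ⟨hθ.1, h⟩) hθ.1
      · rw [← hg1]
        exact mono (Set.mem_Icc.2 ⟨h.le, hθ.2⟩) (Set.mem_Icc.2 ⟨by norm_num, le_refl 1⟩) hθ.2
    have hvθ : 0 ≤ (θ - θ^2) * (v θ)^2 :=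
      mul_nonneg (by nlinarith [hθ.1, hθ.2]) (sq_nonneg _)
    have hgθ : lam * (u θ)^2 ≤ g θ := by
      rw [hgdef]
      simp only
      linarith
    have husq : (u θ)^2 ≤ ((k:ℝ)*(k+1))^2 :=
      le_of_mul_le_mul_left (hgθ.trans hbound) hlam
    have hM : 0 ≤ (k:ℝ)*(k+1) := by positivity
    have : |u θ| ≤ (k:ℝ)*(k+1) := by
      rw [abs_le]
      constructor <;> nlinarith [husq, hM]
    exact this
end

section
/- (Bessel–Legendre inequality, matrix case) Let h > 0, let z : [−h, 0] → ℝ^{m} be square-integrable, let S be a symmetric positive semidefinite m×m real matrix, and let n be a positive natural number. Define ζ_k = ∫_{−h}^{0} l_k((θ+h)/h)·z(θ) dθ ∈ ℝ^m for 0 ≤ k ≤ n−1. Then ∫_{−h}^{0} z(θ)ᵀ S z(θ) dθ ≥ (1/h)·Σ_{k=0}^{n−1} (2k+1)·ζ_kᵀ S ζ_k. -/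
open Finset MeasureTheory Matrix

section aux
open Polynomial

noncomputable def Qpoly (k : ℕ) : ℝ[X] := (X ^ 2 - X) ^ k

noncomputable def legP (k : ℕ) : ℝ[X] := C ((k.factorial : ℝ)⁻¹) * derivative^[k] (Qpoly k)

lemma iter_deriv_X_sub_one_pow (n j : ℕ) :
    derivative^[j] ((X - C (1:ℝ)) ^ n) = C (n.descFactorial j : ℝ) * (X - C 1) ^ (n - j) := by
  induction j with
  | zero => simp
  | succ j ih =>
    rw [Function.iterate_succ_apply', ih, derivative_C_mul, derivative_X_sub_C_pow,
      Nat.descFactorial_succ, Nat.cast_mul, C_mul, Nat.sub_sub]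
    ring

lemma Qpoly_eq_sum (k : ℕ) :
    Qpoly k = ∑ a ∈ range (k + 1), C ((k.choose a : ℝ)) * (X - C 1) ^ (k + a) := by
  have h1 : (X ^ 2 - X : ℝ[X]) = (X - C 1) ^ 2 + (X - C 1) := by
    rw [C_1]; ring
  rw [Qpoly, h1, add_pow]
  refine Finset.sum_congr rfl fun a ha => ?_
  rw [← pow_mul]
  rw [Finset.mem_range] at ha
  have : 2 * a + (k - a) = k + a := by omega
  rw [← pow_add, this, mul_comm, C_eq_natCast]

lemma legP_eval (k : ℕ) (θ : ℝ) :
    (legP k).eval θ = ∑ j ∈ range (k + 1),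
      (k.choose j : ℝ) * ((k + j).choose j : ℝ) * (θ - 1) ^ j := by
  rw [legP, Qpoly_eq_sum]
  rw [iterate_derivative_sum]
  simp only [iterate_derivative_C_mul, iter_deriv_X_sub_one_pow]
  rw [eval_mul, eval_C, eval_finset_sum]
  rw [Finset.mul_sum]
  refine Finset.sum_congr rfl fun j hj => ?_
  simp only [eval_mul, eval_C, eval_pow, eval_sub, eval_X, eval_one]
  have h1 : k + j - k = j := by omega
  rw [h1]
  have h2 : ((k + j).descFactorial k : ℝ) = (k.factorial : ℝ) * ((k + j).choose k : ℝ) := by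
    rw [Nat.descFactorial_eq_factorial_mul_choose]; push_cast; ring
  have h3 : (k + j).choose k = (k + j).choose j := by
    have := Nat.choose_symm_add (a := k) (b := j); omega
  rw [h2]
  have hk : (k.factorial : ℝ) ≠ 0 := by positivity
  field_simp
  rw [h3]
  ring

lemma legP_natDegree (k : ℕ) : (legP k).natDegree ≤ k := by
  have h1 : (legP k).natDegree ≤ (derivative^[k] (Qpoly k)).natDegree :=
    natDegree_C_mul_le _ _
  have h2 := natDegree_iterate_derivative (Qpoly k) k
  have h3 : (Qpoly k).natDegree ≤ 2 * k := by
    rw [Qpoly]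
    refine le_trans (natDegree_pow_le) ?_
    have : (X ^ 2 - X : ℝ[X]).natDegree ≤ 2 := by compute_degree
    nlinarith [this]
  omega

lemma Qpoly_boundary (k j : ℕ) (hj : j < k) :
    (derivative^[j] (Qpoly k)).eval 0 = 0 ∧ (derivative^[j] (Qpoly k)).eval 1 = 0 := by
  have hq : Qpoly k = X ^ k * (X - C 1) ^ k := by
    rw [Qpoly, ← mul_pow]; congr 1; rw [C_1]; ring
  rw [hq, iterate_derivative_mul]
  constructor <;>
  · rw [eval_finset_sum]
    refine Finset.sum_eq_zero fun i hi => ?_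
    rw [Finset.mem_range] at hi
    rw [eval_smul, iterate_derivative_X_pow_eq_C_mul, iter_deriv_X_sub_one_pow]
    simp only [smul_eq_mul, eval_mul, eval_C, eval_pow, eval_X, eval_sub, eval_one]
    first
    | (have : (0:ℝ) ^ (k - (j - i)) = 0 := zero_pow (by omega); rw [this]; ring)
    | (have : ((1:ℝ) - 1) ^ (k - i) = 0 := by rw [sub_self]; exact zero_pow (by omega)
       rw [this]; ring)

lemma poly_parts (p v : ℝ[X]) (h0 : v.eval 0 = 0) (h1 : v.eval 1 = 0) :
    ∫ x in (0:ℝ)..1, p.eval x * (derivative v).eval x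
      = - ∫ x in (0:ℝ)..1, (derivative p).eval x * v.eval x := by
  have key := intervalIntegral.integral_mul_deriv_eq_deriv_mul
    (u := fun x => p.eval x) (u' := fun x => (derivative p).eval x)
    (v := fun x => v.eval x) (v' := fun x => (derivative v).eval x) (a := 0) (b := 1)
    (fun x _ => p.hasDerivAt x) (fun x _ => v.hasDerivAt x)
    ((p.derivative.continuous_aeval).intervalIntegrable 0 1)
    ((v.derivative.continuous_aeval).intervalIntegrable 0 1)
  rw [key, h0, h1]
  ring

lemma parts_iter (k : ℕ) (p : ℝ[X]) : ∀ i, i ≤ k →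
    ∫ x in (0:ℝ)..1, p.eval x * (derivative^[k] (Qpoly k)).eval x
      = (-1)^i * ∫ x in (0:ℝ)..1, (derivative^[i] p).eval x
          * (derivative^[k - i] (Qpoly k)).eval x := by
  intro i
  induction i with
  | zero => simp
  | succ i ih =>
    intro hik
    rw [ih (by omega)]
    have hb := Qpoly_boundary k (k - (i+1)) (by omega)
    have hstep : ∫ x in (0:ℝ)..1, (derivative^[i] p).eval x
          * (derivative^[k - i] (Qpoly k)).eval x
        = - ∫ x in (0:ℝ)..1, (derivative^[i+1] p).eval x
          * (derivative^[k - (i+1)] (Qpoly k)).eval x := by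
      have h2 : k - i = (k - (i+1)) + 1 := by omega
      rw [h2, Function.iterate_succ_apply', Function.iterate_succ_apply']
      exact poly_parts _ _ hb.1 hb.2
    rw [hstep]
    ring

lemma legP_mul_eq (j k : ℕ) (x : ℝ) :
    (legP j).eval x * (legP k).eval x
      = (k.factorial : ℝ)⁻¹ * ((legP j).eval x * (derivative^[k] (Qpoly k)).eval x) := by
  simp only [legP, eval_mul, eval_C]; ring

lemma legP_orth_lt {j k : ℕ} (hjk : j < k) :
    ∫ x in (0:ℝ)..1, (legP j).eval x * (legP k).eval x = 0 := by
  simp_rw [legP_mul_eq j k]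
  rw [intervalIntegral.integral_const_mul, parts_iter k (legP j) k le_rfl]
  have hz : derivative^[k] (legP j) = 0 :=
    iterate_derivative_eq_zero (lt_of_le_of_lt (legP_natDegree j) hjk)
  simp [hz]

lemma beta_nat (b : ℕ) : ∀ a : ℕ, ∫ x in (0:ℝ)..1, x ^ a * (1 - x) ^ b
    = (a.factorial * b.factorial : ℝ) / ((a + b + 1).factorial) := by
  induction b with
  | zero =>
    intro a
    simp only [pow_zero, mul_one, integral_pow]
    rw [Nat.factorial_succ]
    have : (0:ℝ) < (a.factorial : ℝ) := by positivity
    push_cast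
    field_simp
    simp
  | succ b ih =>
    intro a
    have hu : ∀ x : ℝ, HasDerivAt (fun y => (1 - y) ^ (b + 1))
        (-((b+1 : ℝ) * (1 - x) ^ b)) x := by
      intro x
      have h1 : HasDerivAt (fun y : ℝ => 1 - y) (-1) x := (hasDerivAt_id x).const_sub 1
      have := (hasDerivAt_pow (b+1) (1 - x)).comp x h1
      refine this.congr_deriv ?_
      push_cast; ring
    have hv : ∀ x : ℝ, HasDerivAt (fun y => y ^ (a + 1) / (a + 1 : ℝ)) (x ^ a) x := by
      intro x
      have := (hasDerivAt_pow (a+1) x).div_const (a+1 : ℝ)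
      refine this.congr_deriv ?_
      have : (a : ℝ) + 1 ≠ 0 := by positivity
      rw [Nat.add_sub_cancel]; push_cast; field_simp
    have key := intervalIntegral.integral_mul_deriv_eq_deriv_mul
      (u := fun x => (1 - x) ^ (b + 1)) (u' := fun x => -((b+1 : ℝ) * (1 - x) ^ b))
      (v := fun x => x ^ (a + 1) / (a + 1 : ℝ)) (v' := fun x => x ^ a) (a := 0) (b := 1)
      (fun x _ => hu x) (fun x _ => hv x)
      (Continuous.intervalIntegrable (by continuity) 0 1)
      (Continuous.intervalIntegrable (by continuity) 0 1)
    have lhs_eq : ∫ x in (0:ℝ)..1, x ^ a * (1 - x) ^ (b + 1)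
        = ∫ x in (0:ℝ)..1, (1 - x) ^ (b + 1) * x ^ a := by
      congr 1; funext x; ring
    rw [lhs_eq, key]
    have e1 : ∫ x in (0:ℝ)..1, -((b+1 : ℝ) * (1 - x) ^ b) * (x ^ (a + 1) / (a + 1 : ℝ))
        = -((b+1 : ℝ)/(a+1 : ℝ)) * ∫ x in (0:ℝ)..1, x ^ (a+1) * (1 - x) ^ b := by
      rw [← intervalIntegral.integral_const_mul]
      congr 1; funext x; field_simp
    rw [e1, ih (a+1)]
    have ha : ((a:ℝ) + 1) ≠ 0 := by positivity
    have hfac : ((a + 1 + b + 1).factorial : ℝ) = ((a + (b+1) + 1).factorial : ℝ) := by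
      norm_cast
      congr 1
      omega
    simp only [pow_succ, zero_pow, one_pow, sub_self, sub_zero]
    rw [Nat.factorial_succ (a), Nat.factorial_succ b] at *
    push_cast
    rw [← hfac]
    have hfacpos : (0:ℝ) < ((a + 1 + b + 1).factorial : ℝ) := by positivity
    field_simp
    ring

lemma iter_deriv_legP (k : ℕ) :
    derivative^[k] (legP k) = C ((k.factorial : ℝ)⁻¹ * ((2 * k).factorial : ℝ)) := by
  rw [legP, iterate_derivative_C_mul, ← Function.iterate_add_apply]
  have h2k : derivative^[k + k] (Qpoly k) = C (((2 * k).factorial : ℝ)) := by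
    rw [Qpoly_eq_sum, iterate_derivative_sum]
    have : ∀ a ∈ range (k + 1),
        derivative^[k + k] (C ((k.choose a : ℝ)) * (X - C 1) ^ (k + a))
          = if a = k then C (((2 * k).factorial : ℝ)) else 0 := by
      intro a ha
      rw [Finset.mem_range] at ha
      rw [iterate_derivative_C_mul, iter_deriv_X_sub_one_pow]
      by_cases hak : a = k
      · subst hak
        simp [Nat.descFactorial_self, Nat.choose_self, two_mul]
      · have hlt : k + a < k + k := by omega
        rw [Nat.descFactorial_eq_zero_iff_lt.mpr hlt]
        simp [hak]
    rw [Finset.sum_congr rfl this, Finset.sum_ite_eq' (range (k+1)) k]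
    simp
  rw [h2k, ← C_mul]

lemma integral_Qpoly (k : ℕ) : ∫ x in (0:ℝ)..1, (Qpoly k).eval x
    = (-1:ℝ)^k * ((k.factorial : ℝ) * (k.factorial : ℝ) / ((2*k + 1).factorial : ℝ)) := by
  have : ∀ x : ℝ, (Qpoly k).eval x = (-1:ℝ)^k * (x ^ k * (1 - x) ^ k) := by
    intro x
    rw [Qpoly, eval_pow]
    simp only [eval_sub, eval_pow, eval_X]
    rw [← mul_pow, ← neg_pow]
    congr 1; ring
  simp_rw [this]
  rw [intervalIntegral.integral_const_mul, beta_nat k k]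
  have h : k + k + 1 = 2*k+1 := by omega
  rw [h]

lemma legP_norm (k : ℕ) :
    ∫ x in (0:ℝ)..1, (legP k).eval x * (legP k).eval x = 1 / (2 * (k:ℝ) + 1) := by
  simp_rw [legP_mul_eq k k]
  rw [intervalIntegral.integral_const_mul, parts_iter k (legP k) k le_rfl, iter_deriv_legP]
  simp only [Nat.sub_self, Function.iterate_zero_apply, eval_C]
  rw [intervalIntegral.integral_const_mul, integral_Qpoly]
  have h1 : ((2*k+1).factorial : ℝ) = (2*k+1 : ℕ) * ((2*k).factorial : ℝ) := by
    rw [← Nat.cast_mul, ← Nat.factorial_succ]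
  have hk : (0:ℝ) < (k.factorial : ℝ) := by positivity
  have h2k : (0:ℝ) < ((2*k).factorial : ℝ) := by positivity
  rw [h1]
  have hsq : ((-1:ℝ)^k * (-1:ℝ)^k) = 1 := by
    rw [← pow_add, ← two_mul, pow_mul]; norm_num
  push_cast
  field_simp
  ring_nf
  have hsq2 : ((-1:ℝ)) ^ (k * 2) = 1 := by
    rw [mul_comm k 2, pow_mul]; norm_num
  rw [hsq2]

lemma legP_orth (j k : ℕ) :
    ∫ x in (0:ℝ)..1, (legP j).eval x * (legP k).eval x
      = if j = k then 1 / (2 * (k:ℝ) + 1) else 0 := by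
  rcases lt_trichotomy j k with hlt | heq | hgt
  · rw [if_neg hlt.ne, legP_orth_lt hlt]
  · subst heq; rw [if_pos rfl, legP_norm]
  · rw [if_neg hgt.ne']
    have := legP_orth_lt hgt
    rw [← this]
    congr 1; funext x; ring

lemma memℒp_mul_integrable {μ : Measure ℝ} {f g : ℝ → ℝ}
    (hf : MemLp f 2 μ) (hg : MemLp g 2 μ) : Integrable (fun x => f x * g x) μ := by
  have h1 := (hf.add hg).integrable_sq
  have h2 := hf.integrable_sq
  have h3 := hg.integrable_sq
  have he : (fun x => f x * g x) = fun x => (((f x + g x)^2 - f x^2) - g x^2)/2 := by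
    funext x; ring
  rw [he]
  exact (((h1.sub h2).sub h3)).div_const 2

lemma legP_continuous (k : ℕ) (h : ℝ) : Continuous (fun θ : ℝ => (legP k).eval ((θ + h)/h)) :=
  (legP k).continuous_aeval.comp (by continuity)

lemma subst_lemma (h : ℝ) (hh : 0 < h) (G : ℝ → ℝ) :
    ∫ θ in (-h)..0, G ((θ + h)/h) = h * ∫ x in (0:ℝ)..1, G x := by
  have hc : (1/h : ℝ) ≠ 0 := by positivity
  have he : ∀ θ : ℝ, (θ + h)/h = (1/h) * θ + 1 := by intro θ; field_simp
  simp_rw [he]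
  rw [intervalIntegral.integral_comp_mul_add G hc 1]
  have e1 : (1/h) * (-h) + 1 = 0 := by field_simp; norm_num
  have e2 : (1/h) * 0 + 1 = 1 := by ring
  rw [e1, e2, smul_eq_mul, one_div, inv_inv]

lemma LL_orth (h : ℝ) (hh : 0 < h) (j k : ℕ) :
    ∫ θ in (-h)..0, (legP j).eval ((θ + h)/h) * (legP k).eval ((θ + h)/h)
      = if j = k then h / (2 * (k:ℝ) + 1) else 0 := by
  rw [subst_lemma h hh (fun x => (legP j).eval x * (legP k).eval x), legP_orth]
  split
  · rw [mul_one_div]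
  · rw [mul_zero]

lemma intervalIntegrable_sum' {ι : Type*} (s : Finset ι) {f : ι → ℝ → ℝ} {a b : ℝ}
    (h : ∀ i ∈ s, IntervalIntegrable (f i) volume a b) :
    IntervalIntegrable (fun x => ∑ i ∈ s, f i x) volume a b := by
  have h2 := IntervalIntegrable.sum s h
  rwa [show (∑ i ∈ s, f i) = fun x => ∑ i ∈ s, f i x from funext fun x => Finset.sum_apply _ _ _]
    at h2

set_option maxHeartbeats 2000000 in
lemma scalar_bessel (h : ℝ) (hh : 0 < h) (f : ℝ → ℝ)
    (hf : MemLp f 2 (volume.restrict (Set.Ioc (-h) 0))) (n : ℕ) :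
    (1/h) * ∑ k ∈ range n, (2*(k:ℝ)+1) *
        (∫ θ in (-h)..0, (legP k).eval ((θ + h)/h) * f θ)^2
      ≤ ∫ θ in (-h)..0, f θ * f θ := by
  have hle : (-h : ℝ) ≤ 0 := by linarith
  have huIoc : Set.uIoc (-h) 0 = Set.Ioc (-h) 0 := Set.uIoc_of_le hle
  set L : ℕ → ℝ → ℝ := fun k θ => (legP k).eval ((θ + h)/h) with hL
  have hLc : ∀ k, Continuous (L k) := fun k => legP_continuous k h
  have hLmem : ∀ k, MemLp (L k) 2 (volume.restrict (Set.Ioc (-h) 0)) := by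
    intro k
    obtain ⟨CC, hCC⟩ := (isCompact_Icc (a := -h) (b := 0)).exists_bound_of_continuousOn
      (hLc k).continuousOn
    refine MemLp.of_bound ((hLc k).aestronglyMeasurable) (max CC 0) ?_
    refine (ae_restrict_mem measurableSet_Ioc).mono fun x hx => ?_
    exact le_trans (hCC x (Set.Ioc_subset_Icc_self hx)) (le_max_left _ _)
  have hffI : IntervalIntegrable (fun θ => f θ * f θ) volume (-h) 0 := by
    rw [intervalIntegrable_iff, huIoc]
    exact memℒp_mul_integrable hf hf
  have hLfI : ∀ k, IntervalIntegrable (fun θ => L k θ * f θ) volume (-h) 0 := by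
    intro k
    rw [intervalIntegrable_iff, huIoc]
    exact memℒp_mul_integrable (hLmem k) hf
  have hLLI : ∀ j k, IntervalIntegrable (fun θ => L j θ * L k θ) volume (-h) 0 :=
    fun j k => Continuous.intervalIntegrable (by exact (hLc j).mul (hLc k)) _ _
  set d : ℕ → ℝ := fun k => ∫ θ in (-h)..0, L k θ * f θ with hd
  set c : ℕ → ℝ := fun k => (2*(k:ℝ)+1)/h * d k with hc
  set P : ℝ → ℝ := fun θ => ∑ k ∈ range n, c k * L k θ with hP
  set T : ℝ := ∑ k ∈ range n, (2*(k:ℝ)+1)/h * (d k)^2 with hT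
  have hPfI : IntervalIntegrable (fun θ => P θ * f θ) volume (-h) 0 := by
    have : (fun θ => P θ * f θ) = fun θ => ∑ k ∈ range n, c k * (L k θ * f θ) := by
      funext θ; rw [hP]; simp only []; rw [Finset.sum_mul]; congr 1; funext k; ring
    rw [this]
    exact intervalIntegrable_sum' (range n) fun k _ => ((hLfI k).const_mul (c k))
  have hPPI : IntervalIntegrable (fun θ => P θ * P θ) volume (-h) 0 := by
    have : (fun θ => P θ * P θ)
        = fun θ => ∑ j ∈ range n, ∑ k ∈ range n, (c j * c k) * (L j θ * L k θ) := by
      funext θ; rw [hP]; simp only []; rw [Finset.sum_mul_sum]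
      refine Finset.sum_congr rfl fun j _ => Finset.sum_congr rfl fun k _ => by ring
    rw [this]
    exact intervalIntegrable_sum' (range n) fun j _ =>
      intervalIntegrable_sum' (range n) fun k _ => ((hLLI j k).const_mul _)
  have hB : ∫ θ in (-h)..0, P θ * f θ = T := by
    have e : (fun θ => P θ * f θ) = fun θ => ∑ k ∈ range n, c k * (L k θ * f θ) := by
      funext θ; rw [hP]; simp only []; rw [Finset.sum_mul]; congr 1; funext k; ring
    rw [e, intervalIntegral.integral_finset_sum (fun k _ => ((hLfI k).const_mul (c k)))]
    rw [hT]
    refine Finset.sum_congr rfl fun k _ => ?_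
    rw [intervalIntegral.integral_const_mul]
    have hdk : (∫ x in (-h)..0, L k x * f x) = d k := rfl
    rw [hdk, hc]
    ring
  have hC : ∫ θ in (-h)..0, P θ * P θ = T := by
    have e : (fun θ => P θ * P θ)
        = fun θ => ∑ j ∈ range n, ∑ k ∈ range n, (c j * c k) * (L j θ * L k θ) := by
      funext θ; rw [hP]; simp only []; rw [Finset.sum_mul_sum]
      refine Finset.sum_congr rfl fun j _ => Finset.sum_congr rfl fun k _ => by ring
    rw [e, intervalIntegral.integral_finset_sum (fun j _ =>
      intervalIntegrable_sum' (range n) fun k _ => ((hLLI j k).const_mul _))]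
    have e2 : ∀ j ∈ range n, ∫ θ in (-h)..0,
        (∑ k ∈ range n, (c j * c k) * (L j θ * L k θ))
          = (2*(j:ℝ)+1)/h * (d j)^2 := by
      intro j hj
      rw [intervalIntegral.integral_finset_sum (fun k _ => ((hLLI j k).const_mul _))]
      have e3 : ∀ k ∈ range n, ∫ θ in (-h)..0, (c j * c k) * (L j θ * L k θ)
          = if j = k then c j * c k * (h / (2*(k:ℝ)+1)) else 0 := by
        intro k _
        rw [intervalIntegral.integral_const_mul, LL_orth h hh j k]
        split <;> ring
      rw [Finset.sum_congr rfl e3]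
      have e4 : ∀ k ∈ range n, (if j = k then c j * c k * (h / (2*(k:ℝ)+1)) else 0)
          = if k = j then c j * c k * (h / (2*(k:ℝ)+1)) else 0 := by
        intro k _; simp only [eq_comm]
      rw [Finset.sum_congr rfl e4, Finset.sum_ite_eq' (range n) j]
      rw [if_pos hj, hc]
      simp only []
      have h1 : (2*(j:ℝ)+1) ≠ 0 := by positivity
      have h2 : (h:ℝ) ≠ 0 := ne_of_gt hh
      field_simp
    rw [Finset.sum_congr rfl e2, hT]
  have hnonneg : 0 ≤ ∫ θ in (-h)..0, (f θ - P θ) * (f θ - P θ) :=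
    intervalIntegral.integral_nonneg hle fun u _ => mul_self_nonneg _
  have hexpand : ∫ θ in (-h)..0, (f θ - P θ) * (f θ - P θ)
      = (∫ θ in (-h)..0, f θ * f θ) - (2 * T - T) := by
    have e : (fun θ => (f θ - P θ) * (f θ - P θ))
        = fun θ => f θ * f θ - (2 * (P θ * f θ) - P θ * P θ) := by
      funext θ; ring
    rw [e, intervalIntegral.integral_sub hffI
      (((hPfI.const_mul 2)).sub hPPI),
      intervalIntegral.integral_sub (hPfI.const_mul 2) hPPI,
      intervalIntegral.integral_const_mul, hB, hC]
  have hfinal : T ≤ ∫ θ in (-h)..0, f θ * f θ := by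
    rw [hexpand] at hnonneg; linarith
  calc (1/h) * ∑ k ∈ range n, (2*(k:ℝ)+1) *
        (∫ θ in (-h)..0, (legP k).eval ((θ + h)/h) * f θ)^2
      = T := by
        rw [hT, Finset.mul_sum]
        refine Finset.sum_congr rfl fun k _ => ?_
        rw [hd]
        simp only []
        ring
    _ ≤ _ := hfinal

lemma shiftedLegendre_eq (k : ℕ) (θ : ℝ) : _root_.shiftedLegendre k θ = (legP k).eval θ :=
  (legP_eval k θ).symm

lemma legP_memℒp (k : ℕ) (h : ℝ) :
    MemLp (fun θ => (legP k).eval ((θ + h)/h)) 2 (volume.restrict (Set.Ioc (-h) 0)) := by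
  have hLc := legP_continuous k h
  obtain ⟨CC, hCC⟩ := (isCompact_Icc (a := -h) (b := 0)).exists_bound_of_continuousOn
    hLc.continuousOn
  refine MemLp.of_bound hLc.aestronglyMeasurable (max CC 0) ?_
  refine (ae_restrict_mem measurableSet_Ioc).mono fun x hx => ?_
  exact le_trans (hCC x (Set.Ioc_subset_Icc_self hx)) (le_max_left _ _)

open scoped MatrixOrder in
lemma exists_sqrt_sym {m : ℕ} (S : Matrix (Fin m) (Fin m) ℝ) (hS : S.PosSemidef) :
    ∃ A : Matrix (Fin m) (Fin m) ℝ, Aᵀ = A ∧ A * A = S := by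
  refine ⟨CFC.sqrt S, ?_, CFC.sqrt_mul_sqrt_self S hS.nonneg⟩
  rw [← Matrix.conjTranspose_eq_transpose_of_trivial]
  exact (CFC.sqrt_nonneg S).posSemidef.1

end aux

set_option maxHeartbeats 2000000 in
theorem bessel_legendre_inequality_matrix (m : ℕ) (h : ℝ) (hh : 0 < h)
    (z : ℝ → (Fin m → ℝ)) (hz : MemLp z 2 (volume.restrict (Set.Ioc (-h) 0)))
    (S : Matrix (Fin m) (Fin m) ℝ) (hSsymm : S.IsSymm) (hS : S.PosSemidef)
    (n : ℕ) (hn : 1 ≤ n) :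
    (∫ θ in (-h)..0, z θ ⬝ᵥ S.mulVec (z θ)) ≥
      (1 / h) * ∑ k ∈ Finset.range n,
        (2 * (k : ℝ) + 1) *
          ((fun i => ∫ θ in (-h)..0, shiftedLegendre k ((θ + h) / h) * z θ i) ⬝ᵥ
            S.mulVec (fun i => ∫ θ in (-h)..0, shiftedLegendre k ((θ + h) / h) * z θ i)) := by
  have hle : (-h : ℝ) ≤ 0 := by linarith
  have huIoc : Set.uIoc (-h) 0 = Set.Ioc (-h) 0 := Set.uIoc_of_le hle
  obtain ⟨A, hAt, hAA⟩ := exists_sqrt_sym S hS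
  have hquad : ∀ v : Fin m → ℝ, v ⬝ᵥ S.mulVec v = (A.mulVec v) ⬝ᵥ (A.mulVec v) := by
    intro v
    conv_lhs => rw [← hAA]
    rw [← Matrix.mulVec_mulVec, dotProduct_mulVec, ← Matrix.mulVec_transpose, hAt]
  set w : Fin m → ℝ → ℝ := fun i θ => A.mulVec (z θ) i with hw
  have hwmem : ∀ i, MemLp (w i) 2 (volume.restrict (Set.Ioc (-h) 0)) := by
    intro i
    have := (LinearMap.toContinuousLinearMap
      ((LinearMap.proj i).comp A.mulVecLin)).comp_memLp' hz
    refine MemLp.ae_eq ?_ this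
    filter_upwards with θ
    simp [Function.comp, Matrix.mulVecLin_apply, hw]
  have hzmem : ∀ j, MemLp (fun θ => z θ j) 2 (volume.restrict (Set.Ioc (-h) 0)) := by
    intro j
    have := (LinearMap.toContinuousLinearMap
      (LinearMap.proj (R := ℝ) (φ := fun _ : Fin m => ℝ) j)).comp_memLp' hz
    exact MemLp.ae_eq (by filter_upwards with θ; simp [Function.comp]) this
  have hLzI : ∀ k j, IntervalIntegrable
      (fun θ => (legP k).eval ((θ + h)/h) * z θ j) volume (-h) 0 := by
    intro k j
    rw [intervalIntegrable_iff, huIoc]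
    exact memℒp_mul_integrable (legP_memℒp k h) (hzmem j)
  have hwwI : ∀ i, IntervalIntegrable (fun θ => w i θ * w i θ) volume (-h) 0 := by
    intro i
    rw [intervalIntegrable_iff, huIoc]
    exact memℒp_mul_integrable (hwmem i) (hwmem i)
  -- LHS
  have hLHS : (∫ θ in (-h)..0, z θ ⬝ᵥ S.mulVec (z θ))
      = ∑ i : Fin m, ∫ θ in (-h)..0, w i θ * w i θ := by
    have e : (fun θ => z θ ⬝ᵥ S.mulVec (z θ))
        = fun θ => ∑ i : Fin m, w i θ * w i θ := by
      funext θ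
      rw [hquad (z θ)]
      rfl
    rw [e, intervalIntegral.integral_finset_sum (fun i _ => hwwI i)]
  -- ζ identity
  have hzeta : ∀ k, ((fun i => ∫ θ in (-h)..0, shiftedLegendre k ((θ + h) / h) * z θ i) ⬝ᵥ
      S.mulVec (fun i => ∫ θ in (-h)..0, shiftedLegendre k ((θ + h) / h) * z θ i))
      = ∑ i : Fin m, (∫ θ in (-h)..0, (legP k).eval ((θ + h)/h) * w i θ)^2 := by
    intro k
    simp only [shiftedLegendre_eq]
    set ζ : Fin m → ℝ := fun i => ∫ θ in (-h)..0, (legP k).eval ((θ + h)/h) * z θ i with hζ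
    have hAζ : A.mulVec ζ = fun i => ∫ θ in (-h)..0, (legP k).eval ((θ + h)/h) * w i θ := by
      funext i
      rw [Matrix.mulVec, dotProduct]
      have e1 : ∀ j ∈ Finset.univ, A i j * ζ j
          = ∫ θ in (-h)..0, A i j * ((legP k).eval ((θ + h)/h) * z θ j) := by
        intro j _
        rw [hζ]
        exact (intervalIntegral.integral_const_mul _ _).symm
      rw [Finset.sum_congr rfl e1,
        ← intervalIntegral.integral_finset_sum (fun j _ => (hLzI k j).const_mul _)]
      congr 1
      funext θ
      rw [hw]
      simp only [Matrix.mulVec, dotProduct, Finset.mul_sum]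
      exact Finset.sum_congr rfl fun j _ => by ring
    rw [hquad ζ, hAζ]
    simp only [dotProduct]
    exact Finset.sum_congr rfl fun i _ => (sq _).symm
  rw [ge_iff_le, hLHS]
  have hstep : (1 / h) * ∑ k ∈ Finset.range n,
      (2 * (k : ℝ) + 1) *
        ((fun i => ∫ θ in (-h)..0, shiftedLegendre k ((θ + h) / h) * z θ i) ⬝ᵥ
          S.mulVec (fun i => ∫ θ in (-h)..0, shiftedLegendre k ((θ + h) / h) * z θ i))
      = ∑ i : Fin m, (1/h) * ∑ k ∈ Finset.range n, (2 * (k:ℝ) + 1) *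
          (∫ θ in (-h)..0, (legP k).eval ((θ + h)/h) * w i θ)^2 := by
    rw [Finset.sum_congr rfl fun k _ => by rw [hzeta k]]
    rw [← Finset.mul_sum]
    congr 1
    rw [Finset.sum_comm]
    exact Finset.sum_congr rfl fun i _ => by rw [Finset.mul_sum]
  rw [hstep]
  exact Finset.sum_le_sum fun i _ => scalar_bessel h hh (w i) (hwmem i) n
end
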